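/- For all subsets S_1, S_2, S_3 ⊆ [n], the three counts #{σ ∈ S_n : Rmil(σ)=S_1, Lmil(σ)=S_2, Lmap(σ)=S_3}, #{σ ∈ S_n : Cyc(σ)=S_1, Lmic1(σ)=S_2, Lmap(σ)=S_3}, and #{σ ∈ S_n : Lmap(σ)=S_1, Lmip(σ)=S_2, Rmil(σ)=S_3} are all equal; that is, the triples of set-valued statistics (Rmil, Lmil, Lmap), (Cyc, Lmic1, Lmap), (Lmap, Lmip, Rmil) have the same joint distribution over S_n. -/

import Mathlib

open scoped Classical

namespace SortIdx

variable {n : ℕ}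

noncomputable section

/-- The inversion number `inv σ := #{(i,j) : i < j ∧ σ i > σ j}`. -/
def inv (σ : Equiv.Perm (Fin n)) : ℕ :=
  (Finset.univ.filter (fun p : Fin n × Fin n => p.1 < p.2 ∧ σ p.2 < σ p.1)).card

/-- The inversion set `Inv σ := {(i,j) : i < j ∧ σ i > σ j}`. -/
def InvSet (σ : Equiv.Perm (Fin n)) : Finset (Fin n × Fin n) :=
  Finset.univ.filter (fun p : Fin n × Fin n => p.1 < p.2 ∧ σ p.2 < σ p.1)

/-- Right-to-left minimum letters. -/
def RmilSet (σ : Equiv.Perm (Fin n)) : Finset (Fin n) :=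
  (Finset.univ.filter (fun i => ∀ j, i < j → σ i < σ j)).image σ

/-- The number of right-to-left minima. -/
def rmin (σ : Equiv.Perm (Fin n)) : ℕ := (RmilSet σ).card

/-- Right-to-left minimum places. -/
def RmipSet (σ : Equiv.Perm (Fin n)) : Finset (Fin n) :=
  Finset.univ.filter (fun i => ∀ j, i < j → σ i < σ j)

/-- Right-to-left maximum letters. -/
def RmalSet (σ : Equiv.Perm (Fin n)) : Finset (Fin n) :=
  (Finset.univ.filter (fun i => ∀ j, i < j → σ j < σ i)).image σ

/-- The number of right-to-left maxima. -/
def rmax (σ : Equiv.Perm (Fin n)) : ℕ := (RmalSet σ).card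

/-- Left-to-right minimum letters. -/
def LmilSet (σ : Equiv.Perm (Fin n)) : Finset (Fin n) :=
  (Finset.univ.filter (fun i => ∀ j, j < i → σ i < σ j)).image σ

/-- The number of left-to-right minima. -/
def lmin (σ : Equiv.Perm (Fin n)) : ℕ := (LmilSet σ).card

/-- Left-to-right minimum places. -/
def LmipSet (σ : Equiv.Perm (Fin n)) : Finset (Fin n) :=
  Finset.univ.filter (fun i => ∀ j, j < i → σ i < σ j)

/-- Left-to-right maximum letters. -/
def LmalSet (σ : Equiv.Perm (Fin n)) : Finset (Fin n) :=
  (Finset.univ.filter (fun i => ∀ j, j < i → σ j < σ i)).image σ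

/-- The number of left-to-right maxima. -/
def lmax (σ : Equiv.Perm (Fin n)) : ℕ := (LmalSet σ).card

/-- Left-to-right maximum places. -/
def LmapSet (σ : Equiv.Perm (Fin n)) : Finset (Fin n) :=
  Finset.univ.filter (fun i => ∀ j, j < i → σ j < σ i)

/-- `Cyc σ`: the set of smallest elements of the cycles of `σ`
(`i` is smallest in its cycle iff `i ≤ σ^k i` for all `k`). -/
def CycSet (σ : Equiv.Perm (Fin n)) : Finset (Fin n) :=
  Finset.univ.filter (fun i => ∀ k : ℕ, i ≤ (σ ^ k) i)

/-- The number of cycles of `σ` (fixed points included). -/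
def cyc (σ : Equiv.Perm (Fin n)) : ℕ := (CycSet σ).card

/-- One step of the sorting process computing the sorting index: repeatedly
put the largest not-yet-fixed letter `j` in its place by the transposition
`(i j)` where `i = σ⁻¹ j` is the place of the letter `j`, recording the
distance `j - i`.  This produces the unique factorization
`σ = (i₁ j₁)(i₂ j₂)⋯(i_k j_k)` with `j₁ < ⋯ < j_k`, `i_r < j_r`, and sums
the `j_r - i_r`.  The fuel `n` is always sufficient. -/
def sorAux : ℕ → Equiv.Perm (Fin n) → ℕ
  | 0, _ => 0
  | (fuel + 1), σ =>
    if h : σ.support.Nonempty then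
      (((σ.support.max' h : Fin n) : ℕ) - ((σ⁻¹ (σ.support.max' h) : Fin n) : ℕ)) +
        sorAux fuel (σ * Equiv.swap (σ⁻¹ (σ.support.max' h)) (σ.support.max' h))
    else 0

/-- The sorting index of Petersen. -/
def sor (σ : Equiv.Perm (Fin n)) : ℕ := sorAux n σ

theorem bcode_exists (σ : Equiv.Perm (Fin n)) (i : Fin n) :
    ∃ k : ℕ, 0 < k ∧ (σ⁻¹ ^ k) i ≤ i := by
  refine ⟨orderOf σ⁻¹, orderOf_pos σ⁻¹, ?_⟩
  rw [pow_orderOf_eq_one]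
  simp

/-- The `B`-code of `σ`: `Bcode σ i = σ^(-k) i` where `k ≥ 1` is minimal with
`σ^(-k) i ≤ i`. -/
def Bcode (σ : Equiv.Perm (Fin n)) (i : Fin n) : Fin n :=
  (σ⁻¹ ^ (Nat.find (bcode_exists σ i))) i

/-- The `B`-code as a sequence in `L_n` (1-indexed values: the entry at place
`i` is the 1-indexed name of the letter `Bcode σ i`). -/
def BcodeNat (σ : Equiv.Perm (Fin n)) : Fin n → ℕ :=
  fun i => ((Bcode σ i : Fin n) : ℕ) + 1

/-- The Lehmer code: `Leh σ i = #{j : j ≤ i ∧ σ j ≤ σ i}` (1-indexed values). -/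
def Leh (σ : Equiv.Perm (Fin n)) : Fin n → ℕ :=
  fun i => (Finset.univ.filter (fun j => j ≤ i ∧ σ j ≤ σ i)).card

/-- The `A`-code: `A σ := Leh σ⁻¹`. -/
def Acode (σ : Equiv.Perm (Fin n)) : Fin n → ℕ := Leh σ⁻¹

/-- `O(code) := {i : code i = 1}` (for `1`-indexed codes in `L_n`). -/
def Oset (code : Fin n → ℕ) : Finset (Fin n) :=
  Finset.univ.filter (fun i => code i = 1)

/-- `Lmic1 σ := O(B σ)`, the set of places where the `B`-code equals `1`,
equivalently the left-to-right minima of the shifted cycle containing `1`. -/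
def Lmic1Set (σ : Equiv.Perm (Fin n)) : Finset (Fin n) :=
  Oset (BcodeNat σ)

/-- `lmic1 σ := #{i : (B σ)_i = 1}`. -/
def lmic1 (σ : Equiv.Perm (Fin n)) : ℕ := (Lmic1Set σ).card

/-- The bijection `φ = B⁻¹ ∘ A` of Foata–Han. -/
def phi (σ : Equiv.Perm (Fin n)) : Equiv.Perm (Fin n) :=
  Function.invFun BcodeNat (Acode σ)

/-- The algorithm computing the induced set of a code: the list argument is
the list of places still to process (from the last to the first), `S` is the
set of letters still available.  At place `i` we pick the `(code i)`-th
smallest element `l` of `S` (1-indexed), put the pairs `(l, j)` for `j ∈ S`,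
`j > l` into the answer and remove `l` from `S`. -/
def inducedAux : List (Fin n) → Finset (Fin n) → (Fin n → ℕ) → Finset (Fin n × Fin n)
  | [], _, _ => ∅
  | (i :: is), S, code =>
      ((S.filter (fun j => (S.sort (· ≤ ·)).getD (code i - 1) i < j)).image
          (fun j => ((S.sort (· ≤ ·)).getD (code i - 1) i, j))) ∪
        inducedAux is (S.erase ((S.sort (· ≤ ·)).getD (code i - 1) i)) code

/-- The induced set `⟨code⟩` of a code in `L_n`. -/
def induced (code : Fin n → ℕ) : Finset (Fin n × Fin n) :=
  inducedAux (List.finRange n).reverse Finset.univ code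

/-- The sorting set `Sor σ := ⟨B σ⟩`. -/
def SorSet (σ : Equiv.Perm (Fin n)) : Finset (Fin n × Fin n) :=
  induced (BcodeNat σ)

/-- The descent set (as a set of places `i`, `0`-indexed, such that
`σ i > σ (i+1)`). -/
def DesSet (σ : Equiv.Perm (Fin n)) : Finset (Fin n) :=
  Finset.univ.filter (fun i => ∃ h : (i : ℕ) + 1 < n, σ ⟨(i : ℕ) + 1, h⟩ < σ i)

/-- The major index (descents being counted `1`-indexed). -/
def maj (σ : Equiv.Perm (Fin n)) : ℕ :=
  ∑ i ∈ DesSet σ, ((i : ℕ) + 1)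

/-- The charge `chg σ := ∑_{i ∈ Des σ⁻¹} (n - i)` (descents `1`-indexed). -/
def chg (σ : Equiv.Perm (Fin n)) : ℕ :=
  ∑ i ∈ DesSet σ⁻¹, (n - ((i : ℕ) + 1))

/-- The reverse-complement of `σ` : `τ i = n + 1 - σ (n + 1 - i)` (1-indexed). -/
def revcomp (σ : Equiv.Perm (Fin n)) : Equiv.Perm (Fin n) :=
  Fin.revPerm * σ * Fin.revPerm

/-- The reverse major index `rmaj σ := maj (revcomp σ)`. -/
def rmaj (σ : Equiv.Perm (Fin n)) : ℕ := maj (revcomp σ)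

end

end SortIdx

/-!
`Acode σ` (the Lehmer code of `σ⁻¹`) and `BcodeNat σ` are both bijections from `Sₙ` onto the codes
`c` with `1 ≤ c i ≤ i + 1`, and the two triples are read off their codes in the same way: `Rmil` and
`Cyc` are the places with `c i = i + 1`, `Lmil` and `Lmic1` the places with `c i = 1`, and in both
cases `x ∈ Lmap` iff `x + 1` is a right-to-left minimum letter of the code. For the latter, all that
matters is that a left-to-right maximum place `w` has code entry `w + 1` at the letter `σ w`, and
that `c q ≤ x + 1` forces some place `w ≤ x` with `q ≤ σ w`. So `phi = B⁻¹ ∘ A` carries the first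
triple to the second, and the third triple is the first one evaluated at `σ⁻¹`.
-/

namespace Equiv.Perm

variable {α : Type*}

/-- Index-free form of `w = f^[k] z` with `k ≥ 1` and `¬ p (f^[j] z)` for `0 < j < k`
(`exists_pow`, `of_pow`), in which cutting a point out of a cycle (`swap_mul`) is easy to track. -/
inductive ReachesAvoiding (f : Perm α) (p : α → Prop) (z : α) : α → Prop
  | once : ReachesAvoiding f p z (f z)
  | step {y : α} : ReachesAvoiding f p z y → ¬ p y → ReachesAvoiding f p z (f y)

namespace ReachesAvoiding

variable {f : Perm α} {p : α → Prop} {z w : α}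

theorem exists_pow (h : ReachesAvoiding f p z w) :
    ∃ k, 0 < k ∧ (f ^ k) z = w ∧ ∀ j, 0 < j → j < k → ¬ p ((f ^ j) z) := by
  induction h with
  | once => exact ⟨1, one_pos, by simp, fun j hj hj1 => by omega⟩
  | step _ hy ih =>
    obtain ⟨k, hk, rfl, havoid⟩ := ih
    refine ⟨k + 1, k.succ_pos, by rw [pow_succ', Perm.mul_apply], fun j hj hjk => ?_⟩
    rcases (Nat.lt_succ_iff.mp hjk).lt_or_eq with hjk | rfl
    · exact havoid j hj hjk
    · exact hy

theorem of_pow {k : ℕ} (hk : 0 < k) (havoid : ∀ j, 0 < j → j < k → ¬ p ((f ^ j) z)) :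
    ReachesAvoiding f p z ((f ^ k) z) := by
  induction k with
  | zero => omega
  | succ k ih =>
    rw [pow_succ', Perm.mul_apply]
    rcases k.eq_zero_or_pos with rfl | hk
    · exact once
    · exact (ih hk fun j hj hjk => havoid j hj (by omega)).step (havoid k hk k.lt_succ_self)

theorem inv_apply (h : ReachesAvoiding f p z w) : f⁻¹ w = z ∨ ¬ p (f⁻¹ w) := by
  cases h with
  | once => simp
  | step _ hy => simpa using Or.inr hy

theorem sameCycle (h : ReachesAvoiding f p z w) : f.SameCycle z w := by
  obtain ⟨k, -, rfl, -⟩ := h.exists_pow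
  exact ⟨k, by simp⟩

/-- `swap (f t) t * f` cuts `t` out of its cycle: it sends the predecessor of `t` to `f t` and
fixes `t`. -/
theorem swap_mul [DecidableEq α] {t : α} (hz : z ≠ t) (h : ReachesAvoiding f p z w) :
    ReachesAvoiding (swap (f t) t * f) p z (if w = t then f t else w) := by
  set g := swap (f t) t * f
  have hskip : ∀ {y}, y ≠ t → f y ≠ t → g y = f y := fun hy hfy =>
    swap_apply_of_ne_of_ne (f.injective.ne hy) hfy
  have hcut : ∀ {y}, f y = t → g y = f t := fun hfy => by
    simp [g, hfy]
  induction h with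
  | once =>
    by_cases hfz : f z = t
    · rw [if_pos hfz, ← hcut hfz]; exact once
    · rw [if_neg hfz, ← hskip hz hfz]; exact once
  | @step y _ hy ih =>
    by_cases hyt : y = t
    · subst hyt
      simpa using ih
    · rw [if_neg hyt] at ih
      by_cases hfy : f y = t
      · rw [if_pos hfy, ← hcut hfy]; exact ih.step hy
      · rw [if_neg hfy, ← hskip hyt hfy]; exact ih.step hy

end ReachesAvoiding

end Equiv.Perm

namespace SortIdx

open Equiv Equiv.Perm Finset

variable {n : ℕ}

section Bcode

variable {σ : Perm (Fin n)}

theorem reachesAvoiding_bcode (σ : Perm (Fin n)) (i : Fin n) :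
    ReachesAvoiding σ⁻¹ (· ≤ i) i (Bcode σ i) :=
  .of_pow (Nat.find_spec (bcode_exists σ i)).1
    fun _ hj hjk hle => Nat.find_min (bcode_exists σ i) hjk ⟨hj, hle⟩

theorem bcode_le (σ : Perm (Fin n)) (i : Fin n) : Bcode σ i ≤ i :=
  (Nat.find_spec (bcode_exists σ i)).2

theorem bcode_eq_of_reachesAvoiding {i w : Fin n} (hw : w ≤ i)
    (h : ReachesAvoiding σ⁻¹ (· ≤ i) i w) : Bcode σ i = w := by
  obtain ⟨k, hk, rfl, havoid⟩ := h.exists_pow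
  rw [Bcode, (Nat.find_eq_iff _).mpr ⟨⟨hk, hw⟩, fun j hjk ⟨hj, hle⟩ => havoid j hj hjk hle⟩]

theorem le_apply_bcode (σ : Perm (Fin n)) (i : Fin n) : i ≤ σ (Bcode σ i) := by
  rcases (reachesAvoiding_bcode σ i).inv_apply with h | h
  · exact (inv_inv σ ▸ h).ge
  · exact (not_le.mp (inv_inv σ ▸ h)).le

theorem bcode_eq_inv_apply {i : Fin n} (h : σ⁻¹ i ≤ i) : Bcode σ i = σ⁻¹ i :=
  bcode_eq_of_reachesAvoiding h .once

theorem bcode_eq_self_of_apply_eq {i : Fin n} (h : σ i = i) : Bcode σ i = i := by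
  have hi : σ⁻¹ i = i := by rw [inv_eq_iff_eq, h]
  rw [bcode_eq_inv_apply hi.le, hi]

theorem bcode_mul_swap (σ : Perm (Fin n)) {i t : Fin n} (hit : i < t) :
    Bcode (σ * swap (σ⁻¹ t) t) i = Bcode σ i := by
  refine bcode_eq_of_reachesAvoiding (bcode_le σ i) ?_
  rw [mul_inv_rev, swap_inv]
  simpa [((bcode_le σ i).trans_lt hit).ne] using (reachesAvoiding_bcode σ i).swap_mul hit.ne

theorem bcode_eq_self_iff {i : Fin n} : Bcode σ i = i ↔ i ∈ CycSet σ := by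
  simp only [CycSet, mem_filter, mem_univ, true_and]
  constructor
  · intro hi m
    obtain ⟨k, hk, hret, havoid⟩ := (hi ▸ reachesAvoiding_bcode σ i).exists_pow
    have hper : Function.IsPeriodicPt ⇑σ⁻¹ k i := by
      rw [Function.IsPeriodicPt, Function.IsFixedPt, ← coe_pow]
      exact hret
    obtain ⟨m', hm'⟩ :=
      (sameCycle_inv.mpr (⟨m, rfl⟩ : σ.SameCycle i ((σ ^ m) i))).exists_nat_pow_eq
    rw [← hm', coe_pow, ← hper.iterate_mod_apply, ← coe_pow]
    rcases (m' % k).eq_zero_or_pos with h0 | h0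
    · simp [h0]
    · exact (not_le.mp (havoid _ h0 (Nat.mod_lt _ hk))).le
  · intro hmin
    obtain ⟨k, hk⟩ := (sameCycle_inv.mp (reachesAvoiding_bcode σ i).sameCycle).exists_nat_pow_eq
    exact le_antisymm (bcode_le σ i) (hk ▸ hmin k)

end Bcode

section Injectivity

variable {σ : Perm (Fin n)} {t : Fin n}

theorem inv_apply_le_of_fixes (hσ : ∀ j, t < j → σ j = j) : σ⁻¹ t ≤ t := by
  by_contra! h
  exact h.ne (by simpa using hσ _ h)

theorem mul_swap_apply_of_fixes (hσ : ∀ j, t < j → σ j = j) {j : Fin n} (hj : t ≤ j) :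
    (σ * swap (σ⁻¹ t) t) j = j := by
  rcases hj.lt_or_eq with hj | rfl
  · rw [Perm.mul_apply,
      swap_apply_of_ne_of_ne ((inv_apply_le_of_fixes hσ).trans_lt hj).ne' hj.ne', hσ j hj]
  · simp

theorem bcode_mul_swap_of_fixes (hσ : ∀ j, t < j → σ j = j) :
    Bcode (σ * swap (σ⁻¹ t) t) = fun i => if i < t then Bcode σ i else i := by
  ext1 i
  split_ifs with hi
  · exact bcode_mul_swap σ hi
  · exact bcode_eq_self_of_apply_eq (mul_swap_apply_of_fixes hσ (not_lt.mp hi))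

/-- Induction on the largest point `t` that is not fixed: its code entry is `σ⁻¹ t`, and cutting
`t` out of its cycle leaves the code below `t` unchanged. -/
theorem bcode_injective : Function.Injective (Bcode (n := n)) := by
  suffices key : ∀ m : ℕ, ∀ σ τ : Perm (Fin n), (∀ j : Fin n, m ≤ (j : ℕ) → σ j = j) →
      (∀ j : Fin n, m ≤ (j : ℕ) → τ j = j) → Bcode σ = Bcode τ → σ = τ from
    fun σ τ h => key n σ τ (fun j hj => absurd j.isLt (by omega))
      (fun j hj => absurd j.isLt (by omega)) h
  intro m
  induction m with
  | zero =>
    intro σ τ hσ hτ _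
    ext j
    rw [hσ j j.val.zero_le, hτ j j.val.zero_le]
  | succ m ih =>
    intro σ τ hσ hτ h
    by_cases hm : m < n
    swap
    · exact ih σ τ (fun j _ => absurd j.isLt (by omega)) (fun j _ => absurd j.isLt (by omega)) h
    set t : Fin n := ⟨m, hm⟩
    have hσt : ∀ j, t < j → σ j = j := hσ
    have hτt : ∀ j, t < j → τ j = j := hτ
    have hc : σ⁻¹ t = τ⁻¹ t := by
      rw [← bcode_eq_inv_apply (inv_apply_le_of_fixes hσt),
        ← bcode_eq_inv_apply (inv_apply_le_of_fixes hτt), h]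
    have hcut := ih _ _ (fun _ => mul_swap_apply_of_fixes hσt)
      (fun _ => mul_swap_apply_of_fixes hτt) (by rw [bcode_mul_swap_of_fixes hσt, bcode_mul_swap_of_fixes hτt, h])
    rw [hc] at hcut
    exact mul_right_cancel hcut

end Injectivity

section LinearOrder

variable {α : Type*} [LinearOrder α] {σ : Perm α}

theorem mem_image_perm {s : Finset α} {x : α} : x ∈ s.image σ ↔ σ⁻¹ x ∈ s := by
  rw [← Equiv.coe_toEmbedding, ← map_eq_image, mem_map_equiv]
  rfl

theorem forall_lt_apply_lt_iff {i : α} :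
    (∀ j, i < j → σ i < σ j) ↔ ∀ y, y < σ i → σ⁻¹ y < i := by
  constructor
  · intro h y hy
    by_contra! hiy
    rcases hiy.lt_or_eq with hiy | hiy
    · exact (h _ hiy).not_gt (by simpa using hy)
    · exact hy.ne (by simp [hiy])
  · intro h j hij
    by_contra! hji
    rcases hji.lt_or_eq with hji | hji
    · exact (h _ hji).not_gt (by simpa using hij)
    · exact hij.ne (σ.injective hji.symm)

theorem forall_lt_lt_apply_iff {i : α} :
    (∀ j, j < i → σ i < σ j) ↔ ∀ y, y < σ i → i < σ⁻¹ y := by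
  constructor
  · intro h y hy
    by_contra! hiy
    rcases hiy.lt_or_eq with hiy | hiy
    · exact (h _ hiy).not_gt (by simpa using hy)
    · exact hy.ne (by simp [← hiy])
  · intro h j hji
    by_contra! hij
    rcases hij.lt_or_eq with hij | hij
    · exact (h _ hij).not_gt (by simpa using hji)
    · exact hji.ne (σ.injective hij)

end LinearOrder

section Records

variable {σ : Perm (Fin n)}

theorem mem_RmilSet {x : Fin n} : x ∈ RmilSet σ ↔ ∀ y, y < x → σ⁻¹ y < σ⁻¹ x := by
  rw [RmilSet, mem_image_perm, mem_filter, forall_lt_apply_lt_iff]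
  simp

theorem mem_LmilSet {x : Fin n} : x ∈ LmilSet σ ↔ ∀ y, y < x → σ⁻¹ x < σ⁻¹ y := by
  rw [LmilSet, mem_image_perm, mem_filter, forall_lt_lt_apply_iff]
  simp

theorem mem_LmapSet {i : Fin n} : i ∈ LmapSet σ ↔ ∀ j, j < i → σ j < σ i := by
  simp [LmapSet]

theorem RmilSet_inv : RmilSet σ⁻¹ = LmapSet σ := by
  ext
  simp [mem_RmilSet, mem_LmapSet]

theorem LmapSet_inv : LmapSet σ⁻¹ = RmilSet σ := by
  rw [← RmilSet_inv, inv_inv]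

theorem LmilSet_inv : LmilSet σ⁻¹ = LmipSet σ := by
  ext
  simp [mem_LmilSet, LmipSet]

theorem apply_le_apply_of_mem_LmapSet {x w : Fin n} (hx : x ∈ LmapSet σ) (hw : w ≤ x) :
    σ w ≤ σ x := by
  rcases hw.lt_or_eq with hw | rfl
  · exact (mem_LmapSet.mp hx w hw).le
  · exact le_rfl

theorem le_apply_of_mem_LmapSet {w : Fin n} (hw : w ∈ LmapSet σ) : w ≤ σ w := by
  have hmaps : ∀ v ∈ Iic w, σ v ∈ Iic (σ w) := fun v hv =>
    mem_Iic.mpr (apply_le_apply_of_mem_LmapSet hw (mem_Iic.mp hv))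
  have := card_le_card_of_injOn σ hmaps σ.injective.injOn
  rw [Fin.card_Iic, Fin.card_Iic] at this
  exact Fin.le_iff_val_le_val.mpr (by omega)

end Records

section Acode

variable {σ : Perm (Fin n)}

theorem acode_eq_card_add_one (i : Fin n) :
    Acode σ i = #{j ∈ Iio i | σ⁻¹ j < σ⁻¹ i} + 1 := by
  rw [Acode, Leh, ← card_insert_of_notMem (s := {j ∈ Iio i | _}) (a := i) (by simp)]
  congr 1
  ext j
  simp only [mem_filter, mem_univ, true_and, mem_insert, mem_Iio]
  constructor
  · rintro ⟨hji, hle⟩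
    rcases hji.lt_or_eq with hji | rfl
    · exact Or.inr ⟨hji, hle.lt_of_ne (σ⁻¹.injective.ne hji.ne)⟩
    · exact Or.inl rfl
  · rintro (rfl | ⟨hji, hlt⟩)
    · exact ⟨le_rfl, le_rfl⟩
    · exact ⟨hji.le, hlt.le⟩

theorem acode_le (i : Fin n) : Acode σ i ≤ i + 1 := by
  rw [acode_eq_card_add_one, add_le_add_iff_right, ← Fin.card_Iio]
  exact card_filter_le _ _

theorem acode_eq_succ_iff {i : Fin n} : Acode σ i = i + 1 ↔ i ∈ RmilSet σ := by
  rw [acode_eq_card_add_one, add_left_inj, ← Fin.card_Iio, card_filter_eq_iff, mem_RmilSet]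
  simp

theorem acode_eq_one_iff {i : Fin n} : Acode σ i = 1 ↔ i ∈ LmilSet σ := by
  rw [acode_eq_card_add_one, add_eq_right, card_filter_eq_zero_iff, mem_LmilSet]
  simp only [mem_Iio, not_lt]
  exact forall₂_congr fun j hj => ⟨fun h => h.lt_of_ne (σ⁻¹.injective.ne hj.ne'), le_of_lt⟩

theorem acode_apply_of_mem_LmapSet {w : Fin n} (hw : w ∈ LmapSet σ) :
    Acode σ (σ w) = w + 1 := by
  rw [acode_eq_card_add_one, ← Fin.card_Iio w]
  congr 1
  refine (card_equiv σ fun v => ?_).symm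
  simpa using fun hv => mem_LmapSet.mp hw v hv

theorem exists_le_of_acode_le {q x : Fin n} (h : Acode σ q ≤ x + 1) : ∃ w ≤ x, q ≤ σ w := by
  by_contra! hlt
  have hx : x < σ⁻¹ q := by
    by_contra! hq
    simpa using hlt _ hq
  have hmaps : ∀ v ∈ Iic x, σ v ∈ ({j ∈ Iio q | σ⁻¹ j < σ⁻¹ q} : Finset (Fin n)) := fun v hv => by
    have hv := mem_Iic.mp hv
    simpa using ⟨hlt v hv, hv.trans_lt hx⟩
  have := card_le_card_of_injOn σ hmaps σ.injective.injOn
  rw [Fin.card_Iic] at this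
  rw [acode_eq_card_add_one] at h
  omega

theorem card_filter_lt_card_filter {α : Type*} [LinearOrder α] [Fintype α] {p : α → Prop}
    [DecidablePred p] {a b : α} (hab : a < b) (hb : p b) :
    #{v | p v ∧ v ≤ a} < #{v | p v ∧ v ≤ b} := by
  refine card_lt_card ((ssubset_iff_of_subset fun v hv => ?_).mpr ⟨b, ?_, ?_⟩)
  · simp only [mem_filter, mem_univ, true_and] at hv ⊢
    exact ⟨hv.1, hv.2.trans hab.le⟩
  · simpa using hb
  · simpa using fun _ => hab

/-- At the last place `i` where two permutations differ, their values up to `i` form the same set,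
in which `Leh` gives the rank of the value at `i`. -/
theorem leh_injective : Function.Injective (Leh (n := n)) := by
  intro π ρ h
  by_contra hne
  obtain ⟨i, hi, hagree⟩ : ∃ i, π i ≠ ρ i ∧ ∀ j, i < j → π j = ρ j := by
    have hD : ({i | π i ≠ ρ i} : Finset (Fin n)).Nonempty := by
      obtain ⟨i, hi⟩ := not_forall.mp fun h' => hne (Equiv.ext h')
      exact ⟨i, by simpa using hi⟩
    refine ⟨_, (mem_filter.mp (max'_mem _ hD)).2, fun j hj => ?_⟩
    by_contra hj'
    exact (le_max' _ j (by simpa using hj')).not_gt hj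
  have hpre : ∀ {π ρ : Perm (Fin n)}, (∀ j, i < j → π j = ρ j) →
      ∀ v, π⁻¹ v ≤ i → ρ⁻¹ v ≤ i := fun {π ρ} hag v hv => by
    by_contra! hv'
    have : π (ρ⁻¹ v) = v := by simpa using hag _ hv'
    rw [← this] at hv
    exact hv'.not_ge (by simpa using hv)
  have hsame : ∀ v, π⁻¹ v ≤ i ↔ ρ⁻¹ v ≤ i := fun v =>
    ⟨hpre hagree v, hpre (fun j hj => (hagree j hj).symm) v⟩
  have hrank : ∀ g : Perm (Fin n), Leh g i = #{v | g⁻¹ v ≤ i ∧ v ≤ g i} := fun g =>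
    card_equiv g fun j => by simp
  have hleh := congr_fun h i
  simp only [hrank, hsame] at hleh
  rcases hi.lt_or_gt with hlt | hlt
  · exact (card_filter_lt_card_filter (p := (ρ⁻¹ · ≤ i)) hlt (by simp)).ne hleh
  · exact (card_filter_lt_card_filter (p := (ρ⁻¹ · ≤ i)) hlt (hpre hagree _ (by simp))).ne' hleh

theorem acode_injective : Function.Injective (Acode (n := n)) :=
  fun _ _ h => inv_injective (leh_injective h)

end Acode

section Codes

def maxEntrySet (c : Fin n → ℕ) : Finset (Fin n) := {i | c i = i + 1}

/-- `x ∈ rlMinLetters c` iff `x + 1` is a right-to-left minimum letter of the word `c`. -/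
def rlMinLetters (c : Fin n → ℕ) : Finset (Fin n) :=
  {x | ∃ p, c p = x + 1 ∧ ∀ q, p < q → (x : ℕ) + 1 < c q}

variable {σ : Perm (Fin n)}

/-- For the converse, compare `p` with the largest letter `σ m` among the places `m ≤ x`. -/
theorem LmapSet_eq_rlMinLetters {c : Fin n → ℕ} (hc : ∀ w ∈ LmapSet σ, c (σ w) = w + 1)
    (hle : ∀ q x : Fin n, c q ≤ x + 1 → ∃ w ≤ x, q ≤ σ w) : LmapSet σ = rlMinLetters c := by
  ext x
  simp only [rlMinLetters, mem_filter, mem_univ, true_and]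
  constructor
  · intro hx
    refine ⟨σ x, hc x hx, fun q hq => ?_⟩
    by_contra! hqx
    obtain ⟨w, hwx, hqw⟩ := hle q x hqx
    exact (hq.trans_le (hqw.trans (apply_le_apply_of_mem_LmapSet hx hwx))).false
  · rintro ⟨p, hp, hgt⟩
    obtain ⟨m, hm, hmax⟩ := exists_max_image (Iic x) σ ⟨x, mem_Iic.mpr le_rfl⟩
    have hmx : (m : ℕ) ≤ x := Fin.le_iff_val_le_val.mp (mem_Iic.mp hm)
    have hmL : m ∈ LmapSet σ := mem_LmapSet.mpr fun j hj =>
      (hmax j (mem_Iic.mpr (hj.le.trans (mem_Iic.mp hm)))).lt_of_ne (σ.injective.ne hj.ne)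
    rcases lt_trichotomy p (σ m) with hpm | rfl | hpm
    · have := hgt _ hpm
      rw [hc m hmL] at this
      omega
    · rw [hc m hmL] at hp
      have hxm : m = x := Fin.ext (by omega)
      exact hxm ▸ hmL
    · obtain ⟨w, hwx, hpw⟩ := hle p x hp.le
      exact ((hpw.trans (hmax w (mem_Iic.mpr hwx))).not_gt hpm).elim

theorem maxEntrySet_acode : maxEntrySet (Acode σ) = RmilSet σ := by
  ext
  simp [maxEntrySet, acode_eq_succ_iff]

theorem oset_acode : Oset (Acode σ) = LmilSet σ := by
  ext
  simp [Oset, acode_eq_one_iff]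

theorem rlMinLetters_acode : rlMinLetters (Acode σ) = LmapSet σ :=
  (LmapSet_eq_rlMinLetters (fun _ => acode_apply_of_mem_LmapSet)
    fun _ _ => exists_le_of_acode_le).symm

theorem maxEntrySet_bcodeNat : maxEntrySet (BcodeNat σ) = CycSet σ := by
  ext
  simp [maxEntrySet, BcodeNat, ← bcode_eq_self_iff, Fin.ext_iff]

theorem rlMinLetters_bcodeNat : rlMinLetters (BcodeNat σ) = LmapSet σ := by
  refine (LmapSet_eq_rlMinLetters (fun w hw => ?_)
    fun q x hq => ⟨Bcode σ q, ?_, le_apply_bcode σ q⟩).symm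
  · rw [BcodeNat, bcode_eq_inv_apply (by simpa using le_apply_of_mem_LmapSet hw)]
    simp
  · rw [BcodeNat] at hq
    exact Fin.le_iff_val_le_val.mpr (by omega)

def codeSpace (n : ℕ) : Finset (Fin n → ℕ) := Fintype.piFinset fun i => Icc 1 (i + 1)

theorem card_codeSpace : #(codeSpace n) = n.factorial := by
  simp [codeSpace, Fin.prod_univ_eq_prod_range (· + 1), prod_range_add_one_eq_factorial]

theorem range_bcodeNat : Set.range (BcodeNat (n := n)) = codeSpace n := by
  have hinj : Function.Injective (BcodeNat (n := n)) := fun σ τ h =>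
    bcode_injective (funext fun i => Fin.ext (by simpa [BcodeNat] using congr_fun h i))
  have himage : univ.image BcodeNat = codeSpace n := by
    refine eq_of_subset_of_card_le (fun c hc => ?_) ?_
    · obtain ⟨σ, -, rfl⟩ := mem_image.mp hc
      simpa [codeSpace, BcodeNat, Nat.lt_succ_iff] using fun i => bcode_le σ i
    · rw [card_image_of_injective _ hinj, card_univ, Fintype.card_perm, Fintype.card_fin,
        card_codeSpace]
  rw [← himage, coe_image, coe_univ, Set.image_univ]

theorem acode_mem_codeSpace (σ : Perm (Fin n)) : Acode σ ∈ codeSpace n := by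
  simpa [codeSpace] using fun i => ⟨(acode_eq_card_add_one i).ge.trans' le_add_self, acode_le i⟩

theorem bcodeNat_phi (σ : Perm (Fin n)) : BcodeNat (phi σ) = Acode σ :=
  Function.invFun_eq (by simpa [← Set.mem_range, range_bcodeNat] using acode_mem_codeSpace σ)

theorem phi_bijective : Function.Bijective (phi (n := n)) :=
  Finite.injective_iff_bijective.mp fun σ τ h =>
    acode_injective (by rw [← bcodeNat_phi, h, bcodeNat_phi])

theorem CycSet_phi (σ : Perm (Fin n)) : CycSet (phi σ) = RmilSet σ := by
  rw [← maxEntrySet_bcodeNat, bcodeNat_phi, maxEntrySet_acode]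

theorem Lmic1Set_phi (σ : Perm (Fin n)) : Lmic1Set (phi σ) = LmilSet σ := by
  rw [Lmic1Set, bcodeNat_phi, oset_acode]

theorem LmapSet_phi (σ : Perm (Fin n)) : LmapSet (phi σ) = LmapSet σ := by
  rw [← rlMinLetters_bcodeNat, bcodeNat_phi, rlMinLetters_acode]

end Codes

end SortIdx

/-- The triples of set-valued statistics
`(Rmil, Lmil, Lmap)`, `(Cyc, Lmic₁, Lmap)`, `(Lmap, Lmip, Rmil)` have the same
joint distribution on `Sₙ`. -/
theorem triple_setvalued_equidistributed (n : ℕ) (S₁ S₂ S₃ : Finset (Fin n)) :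
    (Nat.card {σ : Equiv.Perm (Fin n) //
        SortIdx.RmilSet σ = S₁ ∧ SortIdx.LmilSet σ = S₂ ∧ SortIdx.LmapSet σ = S₃} =
      Nat.card {σ : Equiv.Perm (Fin n) //
        SortIdx.CycSet σ = S₁ ∧ SortIdx.Lmic1Set σ = S₂ ∧ SortIdx.LmapSet σ = S₃}) ∧
    (Nat.card {σ : Equiv.Perm (Fin n) //
        SortIdx.CycSet σ = S₁ ∧ SortIdx.Lmic1Set σ = S₂ ∧ SortIdx.LmapSet σ = S₃} =
      Nat.card {σ : Equiv.Perm (Fin n) //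
        SortIdx.LmapSet σ = S₁ ∧ SortIdx.LmipSet σ = S₂ ∧ SortIdx.RmilSet σ = S₃}) := by
  open SortIdx in
  have hphi : Nat.card {σ : Equiv.Perm (Fin n) //
        RmilSet σ = S₁ ∧ LmilSet σ = S₂ ∧ LmapSet σ = S₃} =
      Nat.card {σ : Equiv.Perm (Fin n) // CycSet σ = S₁ ∧ Lmic1Set σ = S₂ ∧ LmapSet σ = S₃} :=
    Nat.card_congr <| (Equiv.ofBijective _ phi_bijective).subtypeEquiv fun σ => by
      rw [Equiv.ofBijective_apply, CycSet_phi, Lmic1Set_phi, LmapSet_phi]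
  open SortIdx in
  have hinv : Nat.card {σ : Equiv.Perm (Fin n) //
        LmapSet σ = S₁ ∧ LmipSet σ = S₂ ∧ RmilSet σ = S₃} =
      Nat.card {σ : Equiv.Perm (Fin n) // RmilSet σ = S₁ ∧ LmilSet σ = S₂ ∧ LmapSet σ = S₃} :=
    Nat.card_congr <| (Equiv.inv _).subtypeEquiv fun σ => by
      rw [Equiv.inv_apply, RmilSet_inv, LmilSet_inv, LmapSet_inv]
  exact ⟨hphi, hphi.symm.trans hinv.symm⟩
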